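/- arXiv:1406.1220 — 3 statements merged into one kernel-verified Lean document; each statement's English description precedes it below -/
import Mathlib

section
/- In a product system X = Y×W with S = σ×id and T = id×τ, the cube set Q_{S,T}(X) equals the set of all quadruples ((y1,w1),(y2,w1),(y1,w2),(y2,w2)) with y1,y2 ∈ Y and w1,w2 ∈ W, provided (Y,σ) and (W,τ) are minimal. -/
/-! Every generator `(x, Sⁿx, Tᵐx, SⁿTᵐx)` of the cube, with `x = (y₁, w₁)`, is the corner
quadruple of `y₁, σⁿy₁, w₁, τᵐw₁`. The corner quadruples are cut out by coordinate equalities,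
hence closed, which gives `⊆`. For `⊇`, minimality of `σ` and `τ` makes the points
`(σⁿy₁, τᵐw₁)` dense in `Y × W`, and the corner quadruple depends continuously on them. -/

/-- The `n`-th integer iterate of a homeomorphism, as a function. -/
def hpow {X : Type*} [TopologicalSpace X] (S : X ≃ₜ X) (n : ℤ) : X → X :=
  ⇑(S.toEquiv ^ n)

variable {X : Type*} [TopologicalSpace X]

def cube (S T : X ≃ₜ X) : Set (X × X × X × X) :=
  closure {p | ∃ (x : X) (n m : ℤ),
    p = (x, hpow S n x, hpow T m x, hpow S n (hpow T m x))}

def cube2 (S : X ≃ₜ X) : Set (X × X) :=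
  closure {p | ∃ (x : X) (n : ℤ), p = (x, hpow S n x)}

def relS (S T : X ≃ₜ X) : Set (X × X) :=
  {p | ∃ a : X, (p.1, p.2, a, a) ∈ cube S T}

def relT (S T : X ≃ₜ X) : Set (X × X) :=
  {p | ∃ b : X, (p.1, b, p.2, b) ∈ cube S T}

def minimalST (S T : X ≃ₜ X) : Prop :=
  ∀ x : X, Dense {y : X | ∃ n m : ℤ, y = hpow S n (hpow T m x)}

def minimal1 (S : X ≃ₜ X) : Prop :=
  ∀ x : X, Dense {y : X | ∃ n : ℤ, y = hpow S n x}

def distalST {Y : Type*} [MetricSpace Y] (S T : Y ≃ₜ Y) : Prop :=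
  ∀ x y : Y, x ≠ y → ∃ ε > 0, ∀ n m : ℤ,
    ε ≤ dist (hpow S n (hpow T m x)) (hpow S n (hpow T m y))

def proxT {Y : Type*} [MetricSpace Y] (T : Y ≃ₜ Y) : Set (Y × Y) :=
  {p | ∀ ε > 0, ∃ m : ℤ, dist (hpow T m p.1) (hpow T m p.2) < ε}

namespace Equiv.Perm

def prodCongrHom (α β : Type*) : Perm α × Perm β →* Perm (α × β) where
  toFun e := e.1.prodCongr e.2
  map_one' := rfl
  map_mul' _ _ := rfl

end Equiv.Perm

def productCorners (Y W : Type*) : Set ((Y × W) × (Y × W) × (Y × W) × (Y × W)) :=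
  {q | ∃ (y1 y2 : Y) (w1 w2 : W), q = ((y1, w1), (y2, w1), (y1, w2), (y2, w2))}

theorem productCorners_eq {Y W : Type*} :
    productCorners Y W = {q | q.2.1.2 = q.1.2 ∧ q.2.2.1.1 = q.1.1 ∧
      q.2.2.2 = (q.2.1.1, q.2.2.1.2)} := by
  ext ⟨⟨_, _⟩, ⟨_, _⟩, ⟨_, _⟩, _⟩
  constructor
  · rintro ⟨_, _, _, _, h⟩
    simp only [Prod.mk.injEq] at h
    obtain ⟨⟨rfl, rfl⟩, ⟨rfl, rfl⟩, ⟨rfl, rfl⟩, rfl⟩ := h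
    exact ⟨rfl, rfl, rfl⟩
  · rintro ⟨h₁, h₂, h₃⟩
    dsimp only at h₁ h₂ h₃
    subst h₁ h₂ h₃
    exact ⟨_, _, _, _, rfl⟩

section ProductCube

variable {Y W : Type*} [TopologicalSpace Y] [TopologicalSpace W]

theorem hpow_prodCongr (σ : Y ≃ₜ Y) (τ : W ≃ₜ W) (n : ℤ) (p : Y × W) :
    hpow (σ.prodCongr τ) n p = (hpow σ n p.1, hpow τ n p.2) := by
  have h : (σ.prodCongr τ).toEquiv = Equiv.Perm.prodCongrHom Y W (σ.toEquiv, τ.toEquiv) := rfl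
  rw [hpow, h, ← map_zpow, Prod.pow_mk]
  rfl

@[simp]
theorem hpow_refl (n : ℤ) (y : Y) : hpow (Homeomorph.refl Y) n y = y := by
  change ((1 : Equiv.Perm Y) ^ n) y = y
  rw [one_zpow, Equiv.Perm.one_apply]

theorem isClosed_productCorners [T2Space Y] [T2Space W] : IsClosed (productCorners Y W) := by
  rw [productCorners_eq]
  refine .inter (isClosed_eq ?_ ?_) (.inter (isClosed_eq ?_ ?_) (isClosed_eq ?_ ?_)) <;> fun_prop

theorem cube_prodCongr_subset_productCorners [T2Space Y] [T2Space W] (σ : Y ≃ₜ Y) (τ : W ≃ₜ W) :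
    cube (σ.prodCongr (Homeomorph.refl W)) ((Homeomorph.refl Y).prodCongr τ)
      ⊆ productCorners Y W := by
  refine closure_minimal ?_ isClosed_productCorners
  rintro _ ⟨⟨y, w⟩, n, m, rfl⟩
  exact ⟨y, hpow σ n y, w, hpow τ m w, by simp [hpow_prodCongr]⟩

theorem productCorners_subset_cube_prodCongr {σ : Y ≃ₜ Y} {τ : W ≃ₜ W}
    (hσ : minimal1 σ) (hτ : minimal1 τ) :
    productCorners Y W
      ⊆ cube (σ.prodCongr (Homeomorph.refl W)) ((Homeomorph.refl Y).prodCongr τ) := by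
  rintro _ ⟨y1, y2, w1, w2, rfl⟩
  have h_dense : (y2, w2) ∈ closure ({y | ∃ n : ℤ, y = hpow σ n y1} ×ˢ
      {w | ∃ m : ℤ, w = hpow τ m w1}) := by
    rw [closure_prod_eq]
    exact ⟨hσ y1 y2, hτ w1 w2⟩
  unfold cube
  refine map_mem_closure (f := fun p : Y × W => ((y1, w1), (p.1, w1), (y1, p.2), p))
    (by fun_prop) h_dense ?_
  rintro ⟨_, _⟩ ⟨⟨n, rfl⟩, ⟨m, rfl⟩⟩
  exact ⟨(y1, w1), n, m, by simp [hpow_prodCongr]⟩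

end ProductCube

theorem stmt5_general {Y W : Type*} [MetricSpace Y]
    [MetricSpace W] (σ : Y ≃ₜ Y) (τ : W ≃ₜ W)
    (hσ : minimal1 σ) (hτ : minimal1 τ) :
    cube (σ.prodCongr (Homeomorph.refl W)) ((Homeomorph.refl Y).prodCongr τ)
      = {q | ∃ (y1 y2 : Y) (w1 w2 : W),
          q = ((y1, w1), (y2, w1), (y1, w2), (y2, w2))} :=
  (cube_prodCongr_subset_productCorners σ τ).antisymm
    (productCorners_subset_cube_prodCongr hσ hτ)

theorem stmt5 {Y W : Type*} [MetricSpace Y] [CompactSpace Y]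
    [MetricSpace W] [CompactSpace W] (σ : Y ≃ₜ Y) (τ : W ≃ₜ W)
    (hσ : minimal1 σ) (hτ : minimal1 τ) :
    cube (σ.prodCongr (Homeomorph.refl W)) ((Homeomorph.refl Y).prodCongr τ)
      = {q | ∃ (y1 y2 : Y) (w1 w2 : W),
          q = ((y1, w1), (y2, w1), (y1, w2), (y2, w2))} :=
  stmt5_general σ τ hσ hτ
end

section
/- Let (X,S,T) be a minimal system with commuting transformations S and T. If T is equicontinuous (the family {T^m : m ∈ ℤ} is uniformly equicontinuous), then R_S(X) equals the diagonal Δ_X. -/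
variable {X : Type*} [TopologicalSpace X]

lemma hpow_neg_cancel {X : Type*} [TopologicalSpace X] (T : X ≃ₜ X) (m : ℤ) (w : X) :
    hpow T (-m) (hpow T m w) = w := by
  have h : (T.toEquiv ^ (-m)) * (T.toEquiv ^ m) = 1 := by
    rw [← zpow_add]; simp
  show ((T.toEquiv ^ (-m)) * (T.toEquiv ^ m)) w = w
  rw [h]; rfl

lemma hpow_comm {X : Type*} [TopologicalSpace X] (S T : X ≃ₜ X)
    (h : ∀ x, S (T x) = T (S x)) (n m : ℤ) (w : X) :
    hpow T m (hpow S n w) = hpow S n (hpow T m w) := by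
  have hc : Commute T.toEquiv S.toEquiv := Equiv.ext fun x => by
    simp [Equiv.Perm.mul_apply, h x]
  have he := (hc.zpow_zpow m n).eq
  show (T.toEquiv ^ m * S.toEquiv ^ n) w = _
  rw [he]; rfl

theorem stmt8 {X : Type*} [MetricSpace X] [CompactSpace X] (S T : X ≃ₜ X)
    (hST : ∀ x, S (T x) = T (S x)) (hmin : minimalST S T)
    (heq : ∀ ε > (0:ℝ), ∃ δ > (0:ℝ), ∀ x y : X, dist x y < δ →
      ∀ m : ℤ, dist (hpow T m x) (hpow T m y) < ε) :
    relS S T = Set.diagonal X := by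
  ext ⟨x, y⟩
  simp only [relS, Set.mem_setOf_eq, Set.mem_diagonal_iff]
  constructor
  · rintro ⟨a, ha⟩
    have key : ∀ ε > (0:ℝ), dist x y < ε := by
      intro ε hε
      obtain ⟨δ, hδ, hδ'⟩ := heq (ε/3) (by linarith)
      have hηpos : (0:ℝ) < min (δ/2) (ε/3) := lt_min (by linarith) (by linarith)
      rw [cube, Metric.mem_closure_iff] at ha
      obtain ⟨p, ⟨z, n, m, rfl⟩, hp⟩ := ha _ hηpos
      simp only [Prod.dist_eq, max_lt_iff] at hp
      obtain ⟨h1, h2, h3, h4⟩ := hp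
      have hdz : dist (hpow T m z) (hpow T m (hpow S n z)) < δ := by
        rw [hpow_comm S T hST]
        calc dist (hpow T m z) (hpow S n (hpow T m z))
            ≤ dist (hpow T m z) a + dist a (hpow S n (hpow T m z)) :=
              dist_triangle _ a _
          _ < min (δ/2) (ε/3) + min (δ/2) (ε/3) := by
              rw [dist_comm (hpow T m z) a]; exact add_lt_add h3 h4
          _ ≤ δ := by
              have := min_le_left (δ/2) (ε/3); linarith
      have hzS : dist z (hpow S n z) < ε/3 := by
        have := hδ' _ _ hdz (-m)
        rwa [hpow_neg_cancel, hpow_neg_cancel] at this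
      calc dist x y ≤ dist x z + dist z (hpow S n z) + dist (hpow S n z) y :=
            dist_triangle4 _ _ _ _
        _ < min (δ/2) (ε/3) + ε/3 + min (δ/2) (ε/3) := by
            rw [dist_comm (hpow S n z) y]; exact add_lt_add (add_lt_add h1 hzS) h2
        _ ≤ ε := by have := min_le_right (δ/2) (ε/3); linarith
    by_contra h
    exact absurd (key _ (dist_pos.mpr h)) (lt_irrefl _)
  · rintro rfl
    exact ⟨x, subset_closure ⟨x, 0, 0, by simp [hpow]⟩⟩
end

section
/- Let (X,S,T) be a distal minimal system with commuting transformations S and T, and let R be either S or T. If (x,y) ∈ Q_R(X) and (y,z) ∈ Q_R(X), then (x,z) ∈ Q_R(X). Consequently Q_R(X) is a closed equivalence relation on X. -/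
variable {X : Type*} [TopologicalSpace X]

open Set Filter Topology

def IsDistalFamily {Y : Type*} [PseudoMetricSpace Y] (M : Set (Y → Y)) : Prop :=
  ∀ a b, a ≠ b → ∃ ε > 0, ∀ f ∈ M, ε ≤ dist (f a) (f b)

namespace IsDistalFamily

variable {Y Z : Type*} [PseudoMetricSpace Y] [PseudoMetricSpace Z] {M N : Set (Y → Y)}

theorem mono (h : IsDistalFamily N) (hMN : M ⊆ N) : IsDistalFamily M := fun a b hab =>
  let ⟨ε, hε, h⟩ := h a b hab
  ⟨ε, hε, fun f hf => h f (hMN hf)⟩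

theorem prodMap {A : Set (Z → Z)} (hM : IsDistalFamily M) (hA : IsDistalFamily A) :
    IsDistalFamily (image2 Prod.map M A) := by
  rintro ⟨a, c⟩ ⟨b, d⟩ hne
  rcases eq_or_ne a b with rfl | hab
  · obtain ⟨ε, hε, h⟩ := hA c d fun hcd => hne (by rw [hcd])
    refine ⟨ε, hε, ?_⟩
    rintro _ ⟨f, -, g, hg, rfl⟩
    exact (h g hg).trans (le_max_right _ _)
  · obtain ⟨ε, hε, h⟩ := hM a b hab
    refine ⟨ε, hε, ?_⟩
    rintro _ ⟨f, hf, g, -, rfl⟩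
    exact (h f hf).trans (le_max_left _ _)

protected theorem closure (h : IsDistalFamily M) : IsDistalFamily (closure M) := by
  intro a b hab
  obtain ⟨ε, hε, h⟩ := h a b hab
  have hclosed : IsClosed {w : Y → Y | ε ≤ dist (w a) (w b)} :=
    isClosed_le continuous_const ((continuous_apply a).dist (continuous_apply b))
  exact ⟨ε, hε, fun u hu => closure_minimal h hclosed hu⟩

theorem injective (h : IsDistalFamily M) {f : Y → Y} (hf : f ∈ M) : Function.Injective f := by
  intro a b hab
  by_contra hne
  obtain ⟨ε, hε, h⟩ := h a b hne
  have := h f hf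
  rw [hab, dist_self] at this
  linarith

end IsDistalFamily

section Ellis

variable {Y : Type*} [TopologicalSpace Y]

theorem exists_comp_self_eq_of_isCompact [T2Space Y] {K : Set (Y → Y)} (hne : K.Nonempty)
    (hK : IsCompact K) (hcomp : ∀ f ∈ K, ∀ g ∈ K, f ∘ g ∈ K) : ∃ e ∈ K, e ∘ e = e := by
  let _ : Semigroup (Y → Y) := { mul := (· ∘ ·), mul_assoc := fun _ _ _ => rfl }
  exact exists_idempotent_in_compact_subsemigroup
    (fun r => continuous_pi fun y => continuous_apply (r y)) K hne hK hcomp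

theorem comp_mem_closure {M : Set (Y → Y)} (hc : ∀ f ∈ M, Continuous f)
    (hcomp : ∀ f ∈ M, ∀ g ∈ M, f ∘ g ∈ M) {u v : Y → Y} (hu : u ∈ closure M)
    (hv : v ∈ closure M) : u ∘ v ∈ closure M := by
  have hleft : MapsTo (· ∘ v) M (closure M) := fun f hf =>
    MapsTo.closure (fun g hg => hcomp f hf g hg)
      (continuous_pi fun y => (hc f hf).comp (continuous_apply y)) hv
  simpa only [closure_closure] using
    hleft.closure (continuous_pi fun y => continuous_apply (v y)) hu

end Ellis

theorem IsDistalFamily.mem_closure_orbit_symm {Y : Type*} [MetricSpace Y] [CompactSpace Y]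
    {M : Set (Y → Y)} (hd : IsDistalFamily M) (hc : ∀ f ∈ M, Continuous f)
    (hcomp : ∀ f ∈ M, ∀ g ∈ M, f ∘ g ∈ M) {p q : Y} (hq : q ∈ closure ((· p) '' M)) :
    p ∈ closure ((· q) '' M) := by
  have eval_closure (r : Y) : (· r) '' closure M = closure ((· r) '' M) :=
    image_closure_of_isCompact isClosed_closure.isCompact (continuous_apply r).continuousOn
  rw [← eval_closure] at hq ⊢
  obtain ⟨u, hu, rfl⟩ := hq
  -- In the compact semigroup `closure M ∘ u`, an idempotent `v ∘ u` is injective, so it is `id`.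
  obtain ⟨_, ⟨v, hv, rfl⟩, hidem⟩ := exists_comp_self_eq_of_isCompact (K := (· ∘ u) '' closure M)
    ⟨_, mem_image_of_mem _ hu⟩
    (isClosed_closure.isCompact.image (continuous_pi fun y => continuous_apply (u y)))
    (by
      rintro _ ⟨w, hw, rfl⟩ _ ⟨w', hw', rfl⟩
      exact ⟨w ∘ u ∘ w', comp_mem_closure hc hcomp hw (comp_mem_closure hc hcomp hu hw'), rfl⟩)
  exact ⟨v, hv, hd.closure.injective (comp_mem_closure hc hcomp hv hu) (congrFun hidem p)⟩

section PairMaps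

variable {α : Type*} {G N : Set (α → α)}

def pairMaps (G N : Set (α → α)) : Set (α × α → α × α) :=
  image2 (fun g r => Prod.map g (g ∘ r)) G N

theorem comp_mem_pairMaps (hG_comp : ∀ f ∈ G, ∀ g ∈ G, f ∘ g ∈ G)
    (hN_comp : ∀ r ∈ N, ∀ r' ∈ N, r ∘ r' ∈ N) (hcomm : ∀ g ∈ G, ∀ r ∈ N, g ∘ r = r ∘ g)
    {F F' : α × α → α × α} (hF : F ∈ pairMaps G N) (hF' : F' ∈ pairMaps G N) :
    F ∘ F' ∈ pairMaps G N := by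
  obtain ⟨g, hg, r, hr, rfl⟩ := hF
  obtain ⟨g', hg', r', hr', rfl⟩ := hF'
  refine ⟨g ∘ g', hG_comp g hg g' hg', r ∘ r', hN_comp r hr r' hr', ?_⟩
  funext ⟨a, b⟩
  simp only [Prod.map, Function.comp_apply, Prod.mk.injEq, true_and]
  exact congrArg g (congrFun (hcomm g' hg' r hr) (r' b))

theorem isDistalFamily_pairMaps [PseudoMetricSpace α] (hG : IsDistalFamily G)
    (hG_comp : ∀ f ∈ G, ∀ g ∈ G, f ∘ g ∈ G) (hNG : N ⊆ G) : IsDistalFamily (pairMaps G N) := by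
  refine (hG.prodMap hG).mono ?_
  rintro _ ⟨g, hg, r, hr, rfl⟩
  exact ⟨g, hg, g ∘ r, hG_comp g hg r (hNG hr), rfl⟩

end PairMaps

section GraphClosure

variable {G N : Set (X → X)}

def graphClosure (N : Set (X → X)) : Set (X × X) :=
  closure {p | ∃ r ∈ N, p.2 = r p.1}

theorem continuous_of_mem_pairMaps (hG_cont : ∀ g ∈ G, Continuous g) (hNG : N ⊆ G)
    {F : X × X → X × X} (hF : F ∈ pairMaps G N) : Continuous F := by
  obtain ⟨g, hg, r, hr, rfl⟩ := hF
  exact (hG_cont g hg).prodMap ((hG_cont g hg).comp (hG_cont r (hNG hr)))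

theorem mapsTo_graphClosure_of_mem_pairMaps (hG_cont : ∀ g ∈ G, Continuous g) (hNG : N ⊆ G)
    (hN_comp : ∀ r ∈ N, ∀ r' ∈ N, r ∘ r' ∈ N) (hcomm : ∀ g ∈ G, ∀ r ∈ N, g ∘ r = r ∘ g)
    {F : X × X → X × X} (hF : F ∈ pairMaps G N) :
    MapsTo F (graphClosure N) (graphClosure N) := by
  refine MapsTo.closure ?_ (continuous_of_mem_pairMaps hG_cont hNG hF)
  obtain ⟨g, hg, r, hr, rfl⟩ := hF
  rintro ⟨a, b⟩ ⟨r', hr', rfl : b = r' a⟩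
  exact ⟨r ∘ r', hN_comp r hr r' hr', congrFun (hcomm g hg _ (hN_comp r hr r' hr')) a⟩

theorem graphClosure_subset_closure_orbit (hG_cont : ∀ g ∈ G, Continuous g)
    (hG_min : ∀ x, Dense ((· x) '' G)) (hNG : N ⊆ G) (hcomm : ∀ g ∈ G, ∀ r ∈ N, g ∘ r = r ∘ g)
    (y : X) : graphClosure N ⊆ closure ((· (y, y)) '' pairMaps G N) := by
  refine closure_minimal ?_ isClosed_closure
  rintro ⟨a, b⟩ ⟨r, hr, rfl : b = r a⟩
  have hgraph : MapsTo (fun u => (u, r u)) ((· y) '' G) ((· (y, y)) '' pairMaps G N) := by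
    rintro _ ⟨g, hg, rfl⟩
    exact ⟨_, mem_image2_of_mem hg hr, Prod.ext rfl (congrFun (hcomm g hg r hr) y)⟩
  exact hgraph.closure (continuous_id.prodMk (hG_cont r (hNG hr))) (hG_min y a)

theorem mem_graphClosure_self (hN_id : id ∈ N) (x : X) : (x, x) ∈ graphClosure N :=
  subset_closure ⟨id, hN_id, rfl⟩

theorem mem_graphClosure_swap (hN_inv : ∀ r ∈ N, ∃ r' ∈ N, ∀ x, r' (r x) = x) {x y : X}
    (h : (x, y) ∈ graphClosure N) :
    (y, x) ∈ graphClosure N := by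
  refine MapsTo.closure ?_ continuous_swap h
  rintro ⟨a, b⟩ ⟨r, hr, rfl : b = r a⟩
  obtain ⟨r', hr', hr'r⟩ := hN_inv r hr
  exact ⟨r', hr', (hr'r a).symm⟩

end GraphClosure

theorem exists_mem_graphClosure_mem_closure_orbit {Y : Type*} [MetricSpace Y] [CompactSpace Y]
    {G N : Set (Y → Y)} (hG_cont : ∀ g ∈ G, Continuous g) (hNG : N ⊆ G) (hN_id : id ∈ N)
    (hN_comp : ∀ r ∈ N, ∀ r' ∈ N, r ∘ r' ∈ N) (hcomm : ∀ g ∈ G, ∀ r ∈ N, g ∘ r = r ∘ g)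
    {x y z : Y} (hxy : (x, y) ∈ graphClosure N)
    (hyz : (y, y) ∈ closure ((· (y, z)) '' pairMaps G N)) :
    ∃ x', (x', y) ∈ graphClosure N ∧ (x', y) ∈ closure ((· (x, z)) '' pairMaps G N) := by
  obtain ⟨u, hu, hu_lim⟩ := mem_closure_iff_seq_limit.mp hyz
  choose F hF hFu using hu
  choose g hg r hr hgr using hF
  have hu_eq (k : ℕ) : u k = (g k y, g k (r k z)) := by rw [← hFu k, ← hgr k]; rfl
  obtain ⟨x', φ, hφ, hx'⟩ := CompactSpace.tendsto_subseq fun k => g k x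
  have hu_lim' := hu_lim.comp hφ.tendsto_atTop
  have hy : Tendsto (fun k => g (φ k) y) atTop (𝓝 y) :=
    ((continuous_fst.tendsto _).comp hu_lim').congr fun k => by simp [hu_eq]
  have hz : Tendsto (fun k => g (φ k) (r (φ k) z)) atTop (𝓝 y) :=
    ((continuous_snd.tendsto _).comp hu_lim').congr fun k => by simp [hu_eq]
  refine ⟨x', isClosed_closure.mem_of_tendsto (hx'.prodMk_nhds hy) (.of_forall fun k => ?_),
    mem_closure_of_tendsto (hx'.prodMk_nhds hz) (.of_forall fun k => ?_)⟩
  · exact mapsTo_graphClosure_of_mem_pairMaps hG_cont hNG hN_comp hcomm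
      (mem_image2_of_mem (hg (φ k)) hN_id) hxy
  · exact ⟨_, mem_image2_of_mem (hg (φ k)) (hr (φ k)), rfl⟩

theorem graphClosure_trans {Y : Type*} [MetricSpace Y] [CompactSpace Y] {G N : Set (Y → Y)}
    (hG_cont : ∀ g ∈ G, Continuous g) (hG_comp : ∀ f ∈ G, ∀ g ∈ G, f ∘ g ∈ G)
    (hG_dist : IsDistalFamily G) (hG_min : ∀ x, Dense ((· x) '' G)) (hNG : N ⊆ G)
    (hN_id : id ∈ N) (hN_comp : ∀ r ∈ N, ∀ r' ∈ N, r ∘ r' ∈ N)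
    (hcomm : ∀ g ∈ G, ∀ r ∈ N, g ∘ r = r ∘ g) {x y z : Y} (hxy : (x, y) ∈ graphClosure N)
    (hyz : (y, z) ∈ graphClosure N) : (x, z) ∈ graphClosure N := by
  have hM_dist := isDistalFamily_pairMaps hG_dist hG_comp hNG
  have hM_cont := fun F (hF : F ∈ pairMaps G N) => continuous_of_mem_pairMaps hG_cont hNG hF
  have hM_comp := fun F (hF : F ∈ pairMaps G N) F' (hF' : F' ∈ pairMaps G N) =>
    comp_mem_pairMaps hG_comp hN_comp hcomm hF hF'
  have hyy : (y, y) ∈ closure ((· (y, z)) '' pairMaps G N) :=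
    hM_dist.mem_closure_orbit_symm hM_cont hM_comp
      (graphClosure_subset_closure_orbit hG_cont hG_min hNG hcomm y hyz)
  obtain ⟨x', hx'y, hx'y_orbit⟩ :=
    exists_mem_graphClosure_mem_closure_orbit hG_cont hNG hN_id hN_comp hcomm hxy hyy
  refine closure_minimal ?_ isClosed_closure
    (hM_dist.mem_closure_orbit_symm hM_cont hM_comp hx'y_orbit)
  rintro _ ⟨F, hF, rfl⟩
  exact mapsTo_graphClosure_of_mem_pairMaps hG_cont hNG hN_comp hcomm hF hx'y

section Homeomorph

theorem hpow_eq_coe_zpow (S : X ≃ₜ X) (n : ℤ) : hpow S n = ⇑(S ^ n) := by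
  let toPerm : (X ≃ₜ X) →* Equiv.Perm X :=
    { toFun := Homeomorph.toEquiv, map_one' := rfl, map_mul' := fun _ _ => rfl }
  exact congrArg DFunLike.coe (map_zpow toPerm S n).symm

def orbitMaps (S T : X ≃ₜ X) : Set (X → X) :=
  range fun p : ℤ × ℤ => ⇑(S ^ p.1 * T ^ p.2)

def powMaps (R : X ≃ₜ X) : Set (X → X) :=
  range fun n : ℤ => ⇑(R ^ n)

variable {S T R : X ≃ₜ X}

theorem continuous_of_mem_orbitMaps {g : X → X} (hg : g ∈ orbitMaps S T) : Continuous g := by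
  obtain ⟨p, rfl⟩ := hg
  exact (S ^ p.1 * T ^ p.2).continuous

theorem comp_mem_orbitMaps (hc : Commute S T) {f g : X → X} (hf : f ∈ orbitMaps S T)
    (hg : g ∈ orbitMaps S T) : f ∘ g ∈ orbitMaps S T := by
  obtain ⟨⟨i, j⟩, rfl⟩ := hf
  obtain ⟨⟨i', j'⟩, rfl⟩ := hg
  refine ⟨(i + i', j + j'), ?_⟩
  change ⇑(S ^ (i + i') * T ^ (j + j')) = ⇑((S ^ i * T ^ j) * (S ^ i' * T ^ j'))
  rw [zpow_add, zpow_add, (hc.zpow_zpow i' j).symm.mul_mul_mul_comm]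

theorem powMaps_subset_orbitMaps (hR : R = S ∨ R = T) : powMaps R ⊆ orbitMaps S T := by
  rintro _ ⟨n, rfl⟩
  rcases hR with rfl | rfl
  · exact ⟨(n, 0), by simp⟩
  · exact ⟨(0, n), by simp⟩

theorem id_mem_powMaps : id ∈ powMaps R := ⟨0, rfl⟩

theorem comp_mem_powMaps {r r' : X → X} (hr : r ∈ powMaps R) (hr' : r' ∈ powMaps R) :
    r ∘ r' ∈ powMaps R := by
  obtain ⟨n, rfl⟩ := hr
  obtain ⟨n', rfl⟩ := hr'
  exact ⟨n + n', congrArg DFunLike.coe (zpow_add R n n')⟩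

theorem exists_leftInverse_mem_powMaps {r : X → X} (hr : r ∈ powMaps R) :
    ∃ r' ∈ powMaps R, ∀ x, r' (r x) = x := by
  obtain ⟨n, rfl⟩ := hr
  exact ⟨_, ⟨-n, rfl⟩, fun x => by simp [← Homeomorph.mul_apply]⟩

theorem comp_comm_of_mem_orbitMaps_of_mem_powMaps (hc : Commute S T) (hR : R = S ∨ R = T)
    {g r : X → X} (hg : g ∈ orbitMaps S T) (hr : r ∈ powMaps R) : g ∘ r = r ∘ g := by
  obtain ⟨⟨i, j⟩, rfl⟩ := hg
  obtain ⟨n, rfl⟩ := hr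
  have hRS : Commute R S := by rcases hR with rfl | rfl <;> [exact .refl _; exact hc.symm]
  have hRT : Commute R T := by rcases hR with rfl | rfl <;> [exact hc; exact .refl _]
  exact congrArg DFunLike.coe
    ((hRS.zpow_zpow n i).mul_right (hRT.zpow_zpow n j)).symm.eq

theorem dense_orbitMaps (hmin : minimalST S T) (x : X) : Dense ((· x) '' orbitMaps S T) := by
  refine (hmin x).mono ?_
  rintro _ ⟨i, j, rfl⟩
  exact ⟨_, ⟨(i, j), rfl⟩, by simp only [hpow_eq_coe_zpow]; rfl⟩

theorem cube2_eq_graphClosure (R : X ≃ₜ X) : cube2 R = graphClosure (powMaps R) := by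
  unfold cube2 graphClosure
  congr 1
  ext ⟨a, b⟩
  constructor
  · rintro ⟨x, n, h⟩
    obtain ⟨rfl, rfl⟩ := Prod.mk.inj h
    exact ⟨_, ⟨n, rfl⟩, by rw [hpow_eq_coe_zpow]⟩
  · rintro ⟨_, ⟨n, rfl⟩, h⟩
    exact ⟨a, n, by rw [hpow_eq_coe_zpow]; exact Prod.ext rfl h⟩

end Homeomorph

theorem isDistalFamily_orbitMaps {Y : Type*} [MetricSpace Y] {S T : Y ≃ₜ Y}
    (hd : distalST S T) : IsDistalFamily (orbitMaps S T) := by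
  intro a b hab
  obtain ⟨ε, hε, h⟩ := hd a b hab
  refine ⟨ε, hε, ?_⟩
  rintro _ ⟨⟨i, j⟩, rfl⟩
  have := h i j
  rwa [hpow_eq_coe_zpow, hpow_eq_coe_zpow] at this

theorem stmt9 {X : Type*} [MetricSpace X] [CompactSpace X] (S T : X ≃ₜ X)
    (hST : ∀ x, S (T x) = T (S x)) (hmin : minimalST S T) (hd : distalST S T)
    (R : X ≃ₜ X) (hR : R = S ∨ R = T) :
    (∀ x y z : X, (x, y) ∈ cube2 R → (y, z) ∈ cube2 R → (x, z) ∈ cube2 R) ∧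
    IsClosed (cube2 R) ∧ Equivalence (fun x y : X => (x, y) ∈ cube2 R) := by
  have hc : Commute S T := Homeomorph.ext hST
  simp only [cube2_eq_graphClosure]
  have htrans : ∀ {x y z : X}, (x, y) ∈ graphClosure (powMaps R) →
      (y, z) ∈ graphClosure (powMaps R) → (x, z) ∈ graphClosure (powMaps R) :=
    graphClosure_trans (fun _ => continuous_of_mem_orbitMaps)
      (fun _ hf _ => comp_mem_orbitMaps hc hf) (isDistalFamily_orbitMaps hd)
      (dense_orbitMaps hmin) (powMaps_subset_orbitMaps hR) id_mem_powMaps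
      (fun _ hr _ => comp_mem_powMaps hr)
      (fun _ hg _ => comp_comm_of_mem_orbitMaps_of_mem_powMaps hc hR hg)
  exact ⟨fun _ _ _ => htrans, isClosed_closure, ⟨mem_graphClosure_self id_mem_powMaps,
    mem_graphClosure_swap fun _ => exists_leftInverse_mem_powMaps, htrans⟩⟩
end
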